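/- If f : [0,1] → ℝ is twice continuously differentiable, then for every x ∈ [0,1], lim_{n→∞} n (R_n(f;x) − f(x)) = (1/2) f″(x) x(1−x)(1 − min{x,1−x}). -/

import Mathlib

/-- Generalized rising factorial with increment `h`: `x^(m,h) = x(x+h)···(x+(m-1)h)`. -/
noncomputable def rfac (x h : ℝ) (m : ℕ) : ℝ := ∏ i ∈ Finset.range m, (x + i * h)

/-- Pólya urn probability `p_{n,k}^{a,b,c}`. -/
noncomputable def polyaProb (a b c : ℝ) (n k : ℕ) : ℝ :=
  (n.choose k : ℝ) * rfac a c k * rfac b c (n - k) / rfac (a + b) c n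

/-- The operator `R_n(f;x)` with `c = -min{x,1-x}/(n-1)`. -/
noncomputable def Rop (n : ℕ) (f : ℝ → ℝ) (x : ℝ) : ℝ :=
  ∑ k ∈ Finset.range (n + 1),
    polyaProb x (1 - x) (-(min x (1 - x)) / ((n : ℝ) - 1)) n k * f ((k : ℝ) / n)

/-- Modulus of continuity of `f` on `[a,b]`. -/
noncomputable def modulus (f : ℝ → ℝ) (a b δ : ℝ) : ℝ :=
  sSup {d : ℝ | ∃ u ∈ Set.Icc a b, ∃ v ∈ Set.Icc a b, |u - v| ≤ δ ∧ d = |f u - f v|}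


/-!
`R_n` is a positive linear operator whose weights `p_{n,k}` form a Pólya urn distribution with
step `c = -min{x,1-x}/(n-1)`. For any positive operator `L_n` that reproduces constants and
annihilates `t ↦ t - x`, Taylor's formula and the continuity of `f''` at `x` give
`|n (L_n f - f x) - f'' x / 2 · n M₂| ≤ ε · n M₂ + C_ε · n M₄`, where
`M_j = Σ p_{n,k} (k/n - x)^j`. The factorial moments of the Pólya distribution,
`Σ p_{n,k} k(k-1)⋯(k-r+1) = n(n-1)⋯(n-r+1) x^(r,c)/1^(r,c)`, follow from the Vandermonde identity
for rising factorials and give `M₂` and `M₄` in closed form: since `nc → -min{x,1-x}`,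
`n M₂ → x(1-x)(1 - min{x,1-x})` and `n M₄ = O(1/n)`.
-/

open Finset Filter Topology Set

theorem abs_taylor_two_remainder_le {f f' f'' : ℝ → ℝ} {x t ε : ℝ}
    (hf : ∀ u ∈ uIcc x t, HasDerivAt f (f' u) u) (hf' : ∀ u ∈ uIcc x t, HasDerivAt f' (f'' u) u)
    (hε : ∀ u ∈ uIcc x t, |f'' u - f'' x| ≤ ε) :
    |f t - f x - f' x * (t - x) - f'' x / 2 * (t - x) ^ 2| ≤ ε * (t - x) ^ 2 := by
  have hx : x ∈ uIcc x t := left_mem_uIcc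
  have hε₀ : 0 ≤ ε := by simpa using hε x hx
  have hlin : ∀ v, HasDerivAt (fun v => v - x) 1 v := fun v => (hasDerivAt_id' v).sub_const x
  have first : ∀ u ∈ uIcc x t, |f' u - f' x - f'' x * (u - x)| ≤ ε * |t - x| := by
    intro u hu
    have deriv : ∀ v ∈ uIcc x t,
        HasDerivWithinAt (fun v => f' v - f'' x * (v - x)) (f'' v - f'' x) (uIcc x t) v :=
      fun v hv => (((hf' v hv).fun_sub ((hlin v).const_mul (f'' x))).hasDerivWithinAt).congr_deriv
        (by ring)
    have := (convex_uIcc x t).norm_image_sub_le_of_norm_hasDerivWithin_le deriv hε hx hu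
    simp only [Real.norm_eq_abs, sub_self, mul_zero, sub_zero] at this
    calc |f' u - f' x - f'' x * (u - x)| = |f' u - f'' x * (u - x) - f' x| := by
          rw [sub_right_comm]
      _ ≤ ε * |u - x| := this
      _ ≤ ε * |t - x| := mul_le_mul_of_nonneg_left (abs_sub_left_of_mem_uIcc hu) hε₀
  have deriv : ∀ v ∈ uIcc x t, HasDerivWithinAt
      (fun v => f v - f' x * (v - x) - f'' x / 2 * (v - x) ^ 2)
      (f' v - f' x - f'' x * (v - x)) (uIcc x t) v := by
    intro v hv
    refine (((hf v hv).fun_sub ((hlin v).const_mul (f' x))).fun_sub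
      (((hlin v).fun_pow 2).const_mul (f'' x / 2))).hasDerivWithinAt.congr_deriv ?_
    norm_num
    ring
  have := (convex_uIcc x t).norm_image_sub_le_of_norm_hasDerivWithin_le deriv first hx
    right_mem_uIcc
  simp only [Real.norm_eq_abs, sub_self, mul_zero, sub_zero, zero_pow two_ne_zero] at this
  calc |f t - f x - f' x * (t - x) - f'' x / 2 * (t - x) ^ 2|
      = |f t - f' x * (t - x) - f'' x / 2 * (t - x) ^ 2 - f x| := by congr 1; ring
    _ ≤ ε * |t - x| * |t - x| := this
    _ = ε * (t - x) ^ 2 := by rw [mul_assoc, ← sq, sq_abs]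

theorem exists_abs_taylor_two_remainder_le {f f' f'' : ℝ → ℝ} {a b x ε : ℝ}
    (hf : ∀ t ∈ Icc a b, HasDerivAt f (f' t) t) (hf' : ∀ t ∈ Icc a b, HasDerivAt f' (f'' t) t)
    (hf'' : ContinuousOn f'' (Icc a b)) (hx : x ∈ Icc a b) (hε : 0 < ε) :
    ∃ C, ∀ t ∈ Icc a b,
      |f t - f x - f' x * (t - x) - f'' x / 2 * (t - x) ^ 2|
        ≤ ε * (t - x) ^ 2 + C * (t - x) ^ 4 := by
  obtain ⟨M, hM⟩ := isCompact_Icc.exists_bound_of_continuousOn hf''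
  obtain ⟨δ, hδ, hδε⟩ := Metric.continuousWithinAt_iff.mp (hf'' x hx) ε hε
  have hM₀ : 0 ≤ M := (norm_nonneg _).trans (hM x hx)
  refine ⟨2 * M / δ ^ 2, fun t ht => ?_⟩
  have hsub : uIcc x t ⊆ Icc a b := ordConnected_Icc.uIcc_subset hx ht
  have taylor := fun η => abs_taylor_two_remainder_le (f := f) (f'' := f'') (ε := η)
    (fun u hu => hf u (hsub hu)) (fun u hu => hf' u (hsub hu))
  rcases lt_or_ge |t - x| δ with near | far
  · refine (taylor ε fun u hu => ?_).trans (le_add_of_nonneg_right (by positivity))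
    have hu' : dist u x < δ := (abs_sub_left_of_mem_uIcc hu).trans_lt near
    exact (hδε (hsub hu) hu').le
  · refine (taylor (2 * M) fun u hu => ?_).trans ?_
    · calc |f'' u - f'' x| ≤ |f'' u| + |f'' x| := abs_sub _ _
        _ ≤ M + M := add_le_add (hM u (hsub hu)) (hM x hx)
        _ = 2 * M := by ring
    · have hδt : δ ^ 2 ≤ (t - x) ^ 2 := by
        rw [← sq_abs (t - x)]
        exact pow_le_pow_left₀ hδ.le far 2
      calc 2 * M * (t - x) ^ 2 ≤ 2 * M / δ ^ 2 * (t - x) ^ 4 := by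
            rw [div_mul_eq_mul_div, le_div_iff₀ (by positivity)]
            linear_combination (2 * M * (t - x) ^ 2) * hδt
        _ ≤ ε * (t - x) ^ 2 + 2 * M / δ ^ 2 * (t - x) ^ 4 := le_add_of_nonneg_left (by positivity)

lemma tendsto_zero_of_abs_le_mul_add {α : Type*} {l : Filter α} {e A B : α → ℝ} {V : ℝ}
    (hA : Tendsto A l (𝓝 V)) (hB : Tendsto B l (𝓝 0))
    (h : ∀ ε > 0, ∃ C, ∀ᶠ n in l, |e n| ≤ ε * A n + C * B n) : Tendsto e l (𝓝 0) := by
  rw [Metric.tendsto_nhds]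
  intro η hη
  have hV : 0 < |V| + 1 := by positivity
  obtain ⟨C, hC⟩ := h (η / (2 * (|V| + 1))) (by positivity)
  have hA' : ∀ᶠ n in l, A n < |V| + 1 :=
    hA.eventually (eventually_lt_nhds (by linarith [le_abs_self V]))
  have hB' : ∀ᶠ n in l, C * B n < η / 2 := by
    have := hB.const_mul C
    rw [mul_zero] at this
    exact this.eventually (eventually_lt_nhds (half_pos hη))
  filter_upwards [hC, hA', hB'] with n hCn hAn hBn
  rw [Real.dist_eq, sub_zero]
  calc |e n| ≤ η / (2 * (|V| + 1)) * A n + C * B n := hCn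
    _ < η / (2 * (|V| + 1)) * (|V| + 1) + η / 2 := by gcongr
    _ = η := by field_simp; ring

theorem tendsto_mul_sum_sub_of_moments {ι : Type*} (s : ℕ → Finset ι) (w t : ℕ → ι → ℝ)
    {f f' f'' : ℝ → ℝ} {a b x V : ℝ}
    (hf : ∀ u ∈ Icc a b, HasDerivAt f (f' u) u) (hf' : ∀ u ∈ Icc a b, HasDerivAt f' (f'' u) u)
    (hf'' : ContinuousOn f'' (Icc a b)) (hx : x ∈ Icc a b)
    (ht : ∀ᶠ n in atTop, ∀ i ∈ s n, t n i ∈ Icc a b)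
    (hw : ∀ᶠ n in atTop, ∀ i ∈ s n, 0 ≤ w n i)
    (hw₀ : ∀ᶠ n in atTop, ∑ i ∈ s n, w n i = 1)
    (hw₁ : ∀ᶠ n in atTop, ∑ i ∈ s n, w n i * (t n i - x) = 0)
    (hw₂ : Tendsto (fun n : ℕ => n * ∑ i ∈ s n, w n i * (t n i - x) ^ 2) atTop (𝓝 V))
    (hw₄ : Tendsto (fun n : ℕ => n * ∑ i ∈ s n, w n i * (t n i - x) ^ 4) atTop (𝓝 0)) :
    Tendsto (fun n : ℕ => n * (∑ i ∈ s n, w n i * f (t n i) - f x)) atTop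
      (𝓝 (f'' x / 2 * V)) := by
  set R : ℝ → ℝ := fun u => f u - f x - f' x * (u - x) - f'' x / 2 * (u - x) ^ 2
  have decompose : ∀ᶠ n : ℕ in atTop, f'' x / 2 * (n * ∑ i ∈ s n, w n i * (t n i - x) ^ 2)
      + n * ∑ i ∈ s n, w n i * R (t n i) = n * (∑ i ∈ s n, w n i * f (t n i) - f x) := by
    filter_upwards [hw₀, hw₁] with n h₀ h₁
    have expand : ∑ i ∈ s n, w n i * f (t n i) = f x * ∑ i ∈ s n, w n i
        + f' x * ∑ i ∈ s n, w n i * (t n i - x)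
        + f'' x / 2 * ∑ i ∈ s n, w n i * (t n i - x) ^ 2 + ∑ i ∈ s n, w n i * R (t n i) := by
      simp only [mul_sum, ← sum_add_distrib]
      exact sum_congr rfl fun i _ => by simp only [R]; ring
    rw [expand, h₀, h₁]
    ring
  have remainder : Tendsto (fun n : ℕ => n * ∑ i ∈ s n, w n i * R (t n i)) atTop (𝓝 0) := by
    refine tendsto_zero_of_abs_le_mul_add hw₂ hw₄ fun ε hε => ?_
    obtain ⟨C, hC⟩ := exists_abs_taylor_two_remainder_le hf hf' hf'' hx hε
    refine ⟨C, ?_⟩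
    filter_upwards [ht, hw] with n htn hwn
    calc |n * ∑ i ∈ s n, w n i * R (t n i)| ≤ n * ∑ i ∈ s n, w n i * |R (t n i)| := by
          rw [abs_mul, Nat.abs_cast]
          refine mul_le_mul_of_nonneg_left ((abs_sum_le_sum_abs _ _).trans_eq ?_) n.cast_nonneg
          exact sum_congr rfl fun i hi => by rw [abs_mul, abs_of_nonneg (hwn i hi)]
      _ ≤ n * ∑ i ∈ s n, w n i * (ε * (t n i - x) ^ 2 + C * (t n i - x) ^ 4) := by
          gcongr with i hi
          · exact hwn i hi
          · exact hC _ (htn i hi)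
      _ = ε * (n * ∑ i ∈ s n, w n i * (t n i - x) ^ 2)
          + C * (n * ∑ i ∈ s n, w n i * (t n i - x) ^ 4) := by
          simp only [mul_sum, ← sum_add_distrib]
          exact sum_congr rfl fun i _ => by ring
  simpa using ((hw₂.const_mul (f'' x / 2)).add remainder).congr' decompose

lemma rfac_succ_left (x h : ℝ) (m : ℕ) : rfac x h (m + 1) = x * rfac (x + h) h m := by
  rw [rfac, prod_range_succ', rfac]
  simp only [Nat.cast_add, Nat.cast_one, Nat.cast_zero, zero_mul, add_zero]
  rw [mul_comm]
  congr 1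
  exact prod_congr rfl fun i _ => by ring

lemma rfac_add (x h : ℝ) (p q : ℕ) : rfac x h (p + q) = rfac x h p * rfac (x + p * h) h q := by
  rw [rfac, prod_range_add, rfac, rfac]
  congr 1
  exact prod_congr rfl fun i _ => by push_cast; ring

lemma rfac_two (y c : ℝ) : rfac y c 2 = y * (y + c) := by simp [rfac, prod_range_succ]

lemma rfac_three (y c : ℝ) : rfac y c 3 = y * (y + c) * (y + 2 * c) := by
  simp [rfac, prod_range_succ]

lemma rfac_four (y c : ℝ) : rfac y c 4 = y * (y + c) * (y + 2 * c) * (y + 3 * c) := by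
  simp [rfac, prod_range_succ]

lemma cast_descFactorial_three (k : ℕ) : (k.descFactorial 3 : ℝ) = k * (k - 1) * (k - 2) := by
  rw [← descPochhammer_eval_eq_descFactorial ℝ]
  simp [descPochhammer_succ_eval]

lemma cast_descFactorial_four (k : ℕ) :
    (k.descFactorial 4 : ℝ) = k * (k - 1) * (k - 2) * (k - 3) := by
  rw [← descPochhammer_eval_eq_descFactorial ℝ]
  simp [descPochhammer_succ_eval]

theorem sum_choose_mul_rfac_mul_rfac (c : ℝ) (n : ℕ) (a b : ℝ) :
    ∑ k ∈ range (n + 1), (n.choose k : ℝ) * rfac a c k * rfac b c (n - k) = rfac (a + b) c n := by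
  induction n generalizing a b with
  | zero => simp [rfac]
  | succ n ih =>
    have pascal := sum_choose_succ_mul (fun i j => rfac a c i * rfac b c j) n
    simp only [← mul_assoc] at pascal
    rw [pascal]
    have left : ∑ i ∈ range (n + 1), (n.choose i : ℝ) * rfac a c i * rfac b c (n + 1 - i)
        = b * rfac (a + (b + c)) c n := by
      rw [← ih, mul_sum]
      refine sum_congr rfl fun i hi => ?_
      rw [Nat.sub_add_comm (mem_range_succ_iff.mp hi), rfac_succ_left]
      ring
    have right : ∑ i ∈ range (n + 1), (n.choose i : ℝ) * rfac a c (i + 1) * rfac b c (n - i)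
        = a * rfac (a + c + b) c n := by
      rw [← ih, mul_sum]
      exact sum_congr rfl fun i _ => by rw [rfac_succ_left]; ring
    rw [left, right, rfac_succ_left, ← add_assoc, add_right_comm a c b]
    ring

theorem sum_choose_mul_descFactorial_mul_rfac (c : ℝ) (r n : ℕ) (a b : ℝ) :
    ∑ k ∈ range (n + 1), (n.choose k : ℝ) * (k.descFactorial r : ℝ) * rfac a c k * rfac b c (n - k)
      = (n.descFactorial r : ℝ) * rfac a c r * rfac (a + b + r * c) c (n - r) := by
  induction r generalizing n a with
  | zero => simpa [rfac] using sum_choose_mul_rfac_mul_rfac c n a b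
  | succ r ih =>
    rcases n with _ | m
    · simp
    rw [sum_range_succ', Nat.zero_descFactorial_succ, Nat.cast_zero, mul_zero, zero_mul, zero_mul,
      add_zero]
    have shift : ∀ k ∈ range (m + 1), ((m + 1).choose (k + 1) : ℝ) *
          ((k + 1).descFactorial (r + 1) : ℝ) * rfac a c (k + 1) * rfac b c (m + 1 - (k + 1))
        = (m + 1) * a * ((m.choose k : ℝ) * (k.descFactorial r : ℝ) * rfac (a + c) c k *
          rfac b c (m - k)) := by
      intro k _
      have pascal : ((m + 1 : ℕ) : ℝ) * m.choose k = (m + 1).choose (k + 1) * (k + 1 : ℕ) := by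
        exact_mod_cast Nat.add_one_mul_choose_eq m k
      rw [Nat.succ_descFactorial_succ, Nat.add_sub_add_right, rfac_succ_left]
      push_cast at pascal ⊢
      linear_combination (-a * k.descFactorial r * rfac (a + c) c k * rfac b c (m - k)) * pascal
    rw [sum_congr rfl shift, ← mul_sum, ih, Nat.succ_descFactorial_succ, Nat.add_sub_add_right,
      rfac_succ_left, show a + c + b + r * c = a + b + ((r + 1 : ℕ) : ℝ) * c by push_cast; ring]
    push_cast
    ring

theorem sum_polyaProb_mul_descFactorial_mul_rfac (x c : ℝ) (n r : ℕ) (hc : rfac 1 c n ≠ 0) :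
    (∑ k ∈ range (n + 1), polyaProb x (1 - x) c n k * k.descFactorial r) * rfac 1 c r
      = n.descFactorial r * rfac x c r := by
  rcases lt_or_ge n r with hnr | hrn
  · rw [Nat.descFactorial_eq_zero_iff_lt.mpr hnr, sum_eq_zero fun k hk => by
      rw [Nat.descFactorial_eq_zero_iff_lt.mpr (by have := mem_range.mp hk; omega)]; simp]
    simp
  have split : rfac 1 c n = rfac 1 c r * rfac (1 + r * c) c (n - r) := by
    rw [← rfac_add, Nat.add_sub_cancel' hrn]
  obtain ⟨hr, hnr⟩ := mul_ne_zero_iff.mp (split ▸ hc)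
  have hsum : ∑ k ∈ range (n + 1), polyaProb x (1 - x) c n k * k.descFactorial r
      = (∑ k ∈ range (n + 1), (n.choose k : ℝ) * (k.descFactorial r : ℝ) * rfac x c k *
          rfac (1 - x) c (n - k)) / rfac (x + (1 - x)) c n := by
    rw [sum_div]
    exact sum_congr rfl fun k _ => by rw [polyaProb]; ring
  rw [hsum, sum_choose_mul_descFactorial_mul_rfac, add_sub_cancel, split]
  field_simp

section Polya

variable {x c : ℝ} {n : ℕ}

theorem sum_polyaProb (hc : rfac 1 c n ≠ 0) :
    ∑ k ∈ range (n + 1), polyaProb x (1 - x) c n k = 1 := by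
  simpa [rfac] using sum_polyaProb_mul_descFactorial_mul_rfac x c n 0 hc

theorem sum_polyaProb_mul_cast (hc : rfac 1 c n ≠ 0) :
    ∑ k ∈ range (n + 1), polyaProb x (1 - x) c n k * k = n * x := by
  simpa [rfac] using sum_polyaProb_mul_descFactorial_mul_rfac x c n 1 hc

theorem sum_polyaProb_mul_sub (hc : rfac 1 c n ≠ 0) :
    ∑ k ∈ range (n + 1), polyaProb x (1 - x) c n k * (k - n * x) = 0 := by
  simp only [mul_sub, sum_sub_distrib, ← sum_mul, sum_polyaProb_mul_cast hc, sum_polyaProb hc]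
  ring

theorem sum_polyaProb_mul_sub_sq (hc : rfac 1 c n ≠ 0) :
    (∑ k ∈ range (n + 1), polyaProb x (1 - x) c n k * (k - n * x) ^ 2) * (1 + c)
      = n * (x * (1 - x)) * (1 + n * c) := by
  have μ0 := sum_polyaProb (x := x) hc
  have μ1 := sum_polyaProb_mul_cast (x := x) hc
  have μ2 := sum_polyaProb_mul_descFactorial_mul_rfac x c n 2 hc
  simp only [Nat.cast_descFactorial_two, rfac_two] at μ2
  have expand : ∑ k ∈ range (n + 1), polyaProb x (1 - x) c n k * (k - n * x) ^ 2
      = ∑ k ∈ range (n + 1), polyaProb x (1 - x) c n k * (k * (k - 1))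
        + (1 - 2 * n * x) * ∑ k ∈ range (n + 1), polyaProb x (1 - x) c n k * k
        + (n * x) ^ 2 * ∑ k ∈ range (n + 1), polyaProb x (1 - x) c n k := by
    simp only [mul_sum, ← sum_add_distrib]
    exact sum_congr rfl fun k _ => by ring
  rw [expand, μ0, μ1]
  linear_combination μ2

theorem sum_polyaProb_mul_sub_pow_four (hc : rfac 1 c n ≠ 0) :
    (∑ k ∈ range (n + 1), polyaProb x (1 - x) c n k * (k - n * x) ^ 4) *
        ((1 + c) * (1 + 2 * c) * (1 + 3 * c))
      = n * (x * (1 - x)) * (1 + n * c) * (3 * n * (x * (1 - x)) * (1 + n * c)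
          + 6 * n * c * (1 + n * c) * (1 - 3 * (x * (1 - x))) + 1 - 6 * (x * (1 - x)) - c) := by
  have μ0 := sum_polyaProb (x := x) hc
  have μ1 := sum_polyaProb_mul_cast (x := x) hc
  have μ2 := sum_polyaProb_mul_descFactorial_mul_rfac x c n 2 hc
  have μ3 := sum_polyaProb_mul_descFactorial_mul_rfac x c n 3 hc
  have μ4 := sum_polyaProb_mul_descFactorial_mul_rfac x c n 4 hc
  simp only [Nat.cast_descFactorial_two, cast_descFactorial_three, cast_descFactorial_four,
    rfac_two, rfac_three, rfac_four] at μ2 μ3 μ4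
  have expand : ∑ k ∈ range (n + 1), polyaProb x (1 - x) c n k * (k - n * x) ^ 4
      = ∑ k ∈ range (n + 1), polyaProb x (1 - x) c n k * (k * (k - 1) * (k - 2) * (k - 3))
        + (6 - 4 * n * x) * ∑ k ∈ range (n + 1), polyaProb x (1 - x) c n k * (k * (k - 1) * (k - 2))
        + (7 - 12 * n * x + 6 * (n * x) ^ 2) *
            ∑ k ∈ range (n + 1), polyaProb x (1 - x) c n k * (k * (k - 1))
        + (1 - 4 * n * x + 6 * (n * x) ^ 2 - 4 * (n * x) ^ 3) *
            ∑ k ∈ range (n + 1), polyaProb x (1 - x) c n k * k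
        + (n * x) ^ 4 * ∑ k ∈ range (n + 1), polyaProb x (1 - x) c n k := by
    simp only [mul_sum, ← sum_add_distrib]
    exact sum_congr rfl fun k _ => by ring
  rw [expand, μ0, μ1]
  linear_combination μ4 + (6 - 4 * n * x) * (1 + 3 * c) * μ3
    + (7 - 12 * n * x + 6 * (n * x) ^ 2) * (1 + 2 * c) * (1 + 3 * c) * μ2

lemma rfac_one_pos (hc : ∀ i < n, -min x (1 - x) ≤ i * c) : 0 < rfac 1 c n := by
  refine prod_pos fun i hi => ?_
  have : min x (1 - x) ≤ 1 / 2 := by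
    rcases le_total x (1 / 2) with h | h
    · exact (min_le_left _ _).trans h
    · exact (min_le_right _ _).trans (by linarith)
  linarith [hc i (mem_range.mp hi)]

lemma polyaProb_nonneg (hc : ∀ i < n, -min x (1 - x) ≤ i * c) {k : ℕ} (hk : k ≤ n) :
    0 ≤ polyaProb x (1 - x) c n k := by
  have hxc : ∀ i < n, 0 ≤ x + i * c := fun i hi => by linarith [hc i hi, min_le_left x (1 - x)]
  have hyc : ∀ i < n, 0 ≤ 1 - x + i * c := fun i hi => by
    linarith [hc i hi, min_le_right x (1 - x)]
  rw [polyaProb, add_sub_cancel]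
  refine div_nonneg (mul_nonneg (mul_nonneg (Nat.cast_nonneg _) ?_) ?_) (rfac_one_pos hc).le
  · exact prod_nonneg fun i hi => hxc i (by have := mem_range.mp hi; omega)
  · exact prod_nonneg fun i hi => hyc i (by have := mem_range.mp hi; omega)

end Polya

lemma sum_mul_div_sub_pow {w : ℕ → ℝ} {n : ℕ} (hn : (n : ℝ) ≠ 0) (x : ℝ) (j : ℕ) :
    ∑ k ∈ range (n + 1), w k * ((k : ℝ) / n - x) ^ j
      = (∑ k ∈ range (n + 1), w k * (k - n * x) ^ j) / n ^ j := by
  rw [sum_div]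
  refine sum_congr rfl fun k _ => ?_
  rw [show (k : ℝ) / n - x = (k - n * x) / n by field_simp, div_pow, mul_div_assoc]

noncomputable def ropStep (x : ℝ) (n : ℕ) : ℝ := -min x (1 - x) / ((n : ℝ) - 1)

section RopStep

variable {x : ℝ}

lemma neg_min_le_mul_ropStep (hx : x ∈ Icc (0 : ℝ) 1) {i n : ℕ} (hi : i < n) :
    -min x (1 - x) ≤ i * ropStep x n := by
  have hin : (i : ℝ) ≤ n - 1 := by
    have : (i : ℝ) + 1 ≤ n := by exact_mod_cast hi
    linarith
  have : (i : ℝ) / (n - 1) ≤ 1 := div_le_one_of_le₀ hin (by linarith [i.cast_nonneg (α := ℝ)])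
  rw [ropStep, mul_div_assoc', mul_neg, neg_div, neg_le_neg_iff, mul_div_right_comm]
  exact mul_le_of_le_one_left (le_min hx.1 (sub_nonneg.mpr hx.2)) this

lemma rfac_one_ropStep_pos (hx : x ∈ Icc (0 : ℝ) 1) (n : ℕ) : 0 < rfac 1 (ropStep x n) n :=
  rfac_one_pos fun _ => neg_min_le_mul_ropStep hx

lemma tendsto_ropStep (x : ℝ) : Tendsto (ropStep x) atTop (𝓝 0) :=
  tendsto_const_nhds.div_atTop (tendsto_atTop_add_const_right _ (-1) tendsto_natCast_atTop_atTop)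

lemma tendsto_mul_ropStep (x : ℝ) :
    Tendsto (fun n : ℕ => n * ropStep x n) atTop (𝓝 (-min x (1 - x))) := by
  have := (tendsto_natCast_div_add_atTop (𝕜 := ℝ) (-1)).const_mul (-min x (1 - x))
  rw [mul_one] at this
  refine this.congr fun n => ?_
  rw [ropStep, ← sub_eq_add_neg]
  ring

lemma tendsto_one_div_ropStep_mul_ropStep (x : ℝ) :
    Tendsto (fun n : ℕ => ((1 : ℝ) / n, ropStep x n, n * ropStep x n)) atTop
      (𝓝 (0, 0, -min x (1 - x))) :=
  tendsto_one_div_atTop_nhds_zero_nat.prodMk_nhds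
    ((tendsto_ropStep x).prodMk_nhds (tendsto_mul_ropStep x))

theorem tendsto_rop_second_moment (hx : x ∈ Icc (0 : ℝ) 1) :
    Tendsto (fun n : ℕ => n * ∑ k ∈ range (n + 1),
      polyaProb x (1 - x) (ropStep x n) n k * ((k : ℝ) / n - x) ^ 2)
      atTop (𝓝 (x * (1 - x) * (1 - min x (1 - x)))) := by
  set F : ℝ × ℝ × ℝ → ℝ := fun p => x * (1 - x) * (1 + p.2.2) / (1 + p.2.1)
  have hF : ContinuousAt F (0, 0, -min x (1 - x)) :=
    ContinuousAt.div (by fun_prop) (by fun_prop) (by norm_num)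
  have hlim := hF.tendsto.comp (tendsto_one_div_ropStep_mul_ropStep x)
  simp only [F, add_zero, div_one, ← sub_eq_add_neg] at hlim
  refine hlim.congr' ?_
  have hD := ((tendsto_ropStep x).const_add 1).eventually_ne (show (1 : ℝ) + 0 ≠ 0 by norm_num)
  filter_upwards [eventually_ne_atTop 0, hD] with n hn hD
  have hn' : (n : ℝ) ≠ 0 := Nat.cast_ne_zero.mpr hn
  have moment := sum_polyaProb_mul_sub_sq (x := x) (rfac_one_ropStep_pos hx n).ne'
  rw [Function.comp_apply, sum_mul_div_sub_pow hn', div_eq_iff hD]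
  generalize ∑ k ∈ range (n + 1), polyaProb x (1 - x) (ropStep x n) n k * ((k : ℝ) - n * x) ^ 2
    = S at moment ⊢
  rw [show (n : ℝ) * (S / n ^ 2) * (1 + ropStep x n) = S * (1 + ropStep x n) / n by field_simp,
    moment]
  field_simp

theorem tendsto_rop_fourth_moment (hx : x ∈ Icc (0 : ℝ) 1) :
    Tendsto (fun n : ℕ => n * ∑ k ∈ range (n + 1),
      polyaProb x (1 - x) (ropStep x n) n k * ((k : ℝ) / n - x) ^ 4) atTop (𝓝 0) := by
  set y := x * (1 - x)
  set F : ℝ × ℝ × ℝ → ℝ := fun p => p.1 * (y * (1 + p.2.2) * (3 * y * (1 + p.2.2)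
    + p.1 * (6 * p.2.2 * (1 + p.2.2) * (1 - 3 * y) + 1 - 6 * y - p.2.1)))
    / ((1 + p.2.1) * (1 + 2 * p.2.1) * (1 + 3 * p.2.1))
  have hF : ContinuousAt F (0, 0, -min x (1 - x)) :=
    ContinuousAt.div (by fun_prop) (by fun_prop) (by norm_num)
  have hlim := hF.tendsto.comp (tendsto_one_div_ropStep_mul_ropStep x)
  simp only [F, zero_mul, zero_div] at hlim
  refine hlim.congr' ?_
  have hD := ((show Continuous fun c : ℝ => (1 + c) * (1 + 2 * c) * (1 + 3 * c) by fun_prop)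
    |>.tendsto 0 |>.comp (tendsto_ropStep x)).eventually_ne
    (show (1 + (0 : ℝ)) * (1 + 2 * 0) * (1 + 3 * 0) ≠ 0 by norm_num)
  filter_upwards [eventually_ne_atTop 0, hD] with n hn hD
  have hn' : (n : ℝ) ≠ 0 := Nat.cast_ne_zero.mpr hn
  have moment := sum_polyaProb_mul_sub_pow_four (x := x) (rfac_one_ropStep_pos hx n).ne'
  rw [Function.comp_apply] at hD
  rw [Function.comp_apply, sum_mul_div_sub_pow hn', div_eq_iff hD]
  generalize ∑ k ∈ range (n + 1), polyaProb x (1 - x) (ropStep x n) n k * ((k : ℝ) - n * x) ^ 4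
    = S at moment ⊢
  set c := ropStep x n
  rw [show (n : ℝ) * (S / n ^ 4) * ((1 + c) * (1 + 2 * c) * (1 + 3 * c))
    = S * ((1 + c) * (1 + 2 * c) * (1 + 3 * c)) / n ^ 3 by field_simp, moment]
  field_simp
  ring

end RopStep

theorem Rop_asymptotic (f f' f'' : ℝ → ℝ)
    (hf : ∀ t ∈ Set.Icc (0 : ℝ) 1, HasDerivAt f (f' t) t)
    (hf' : ∀ t ∈ Set.Icc (0 : ℝ) 1, HasDerivAt f' (f'' t) t)
    (hf'' : ContinuousOn f'' (Set.Icc (0 : ℝ) 1))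
    (x : ℝ) (hx : x ∈ Set.Icc (0 : ℝ) 1) :
    Filter.Tendsto (fun n : ℕ => (n : ℝ) * (Rop n f x - f x)) Filter.atTop
      (nhds ((1 / 2) * f'' x * (x * (1 - x) * (1 - min x (1 - x))))) := by
  have hc n := (rfac_one_ropStep_pos hx n).ne'
  have nodes : ∀ᶠ n : ℕ in atTop, ∀ k ∈ range (n + 1), (k : ℝ) / n ∈ Icc (0 : ℝ) 1 :=
    Eventually.of_forall fun n k hk => ⟨by positivity,
      div_le_one_of_le₀ (by exact_mod_cast mem_range_succ_iff.mp hk) n.cast_nonneg⟩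
  have nonneg : ∀ᶠ n : ℕ in atTop, ∀ k ∈ range (n + 1), 0 ≤ polyaProb x (1 - x) (ropStep x n) n k :=
    Eventually.of_forall fun n k hk =>
      polyaProb_nonneg (fun _ => neg_min_le_mul_ropStep hx) (mem_range_succ_iff.mp hk)
  have mean : ∀ᶠ n : ℕ in atTop,
      ∑ k ∈ range (n + 1), polyaProb x (1 - x) (ropStep x n) n k * ((k : ℝ) / n - x) = 0 := by
    filter_upwards [eventually_ne_atTop 0] with n hn
    simpa [sum_polyaProb_mul_sub (hc n)] using
      sum_mul_div_sub_pow (w := polyaProb x (1 - x) (ropStep x n) n) (Nat.cast_ne_zero.mpr hn) x 1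
  have := tendsto_mul_sum_sub_of_moments (fun n => range (n + 1))
    (fun n => polyaProb x (1 - x) (ropStep x n) n) (fun n k => (k : ℝ) / n) hf hf' hf'' hx
    nodes nonneg (Eventually.of_forall fun n => sum_polyaProb (hc n)) mean
    (tendsto_rop_second_moment hx) (tendsto_rop_fourth_moment hx)
  rwa [one_div_mul_eq_div]
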